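/- For every finite word t over A of length ℓ and every integer n ≥ 1 such that n = 3^k or n = 2·3^k for some k ≥ 0 and 36n ≤ 3^ℓ, there exists an index i with i + 2n ≤ 3^ℓ such that T(t)[i+j] = T(t)[i+n+j] for all 0 ≤ j < n; that is, T(t) contains a square of order n. -/

import Mathlib

/-- The alphabet B = {0, 1, ?}. -/
inductive B : Type
  | b0 : B
  | b1 : B
  | bq : B
deriving DecidableEq, Inhabited, Repr

/-- The six Stewart patterns a = 01?, b = 10?, c = 0?1, d = 1?0, e = ?01, f = ?10. -/
inductive A : Type
  | a : A
  | b : A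
  | c : A
  | d : A
  | e : A
  | f : A
deriving DecidableEq, Inhabited, Repr

open B in
/-- The length-3 word over B associated with a Stewart pattern. -/
def pat : A → List B
  | .a => [b0, b1, bq]
  | .b => [b1, b0, bq]
  | .c => [b0, bq, b1]
  | .d => [b1, bq, b0]
  | .e => [bq, b0, b1]
  | .f => [bq, b1, b0]

/-- Replace the occurrences of `?` in the first word, in order,
by the symbols of the second word. -/
def fill : List B → List B → List B
  | [], _ => []
  | B.bq :: rest, s :: ss => s :: fill rest ss
  | B.bq :: rest, [] => B.bq :: fill rest []
  | x :: rest, ss => x :: fill rest ss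

/-- Helper: the finite Stewart word of the *reverse* of `t`. -/
def Trev : List A → List B
  | [] => [B.bq]
  | g :: t => fill (Trev t ++ Trev t ++ Trev t) (pat g)

/-- The finite Stewart word `T(t)`, of length `3 ^ t.length`:
`T(ε) = ?`, and `T(t g)` is obtained from `T(t)T(t)T(t)` by replacing its
three occurrences of `?`, in order, by the three symbols of the pattern `g`. -/
def stewT (t : List A) : List B := Trev t.reverse

/-- The length-`r` prefix of an infinite sequence of Stewart patterns, as a list. -/
def prefT (t : ℕ → A) (r : ℕ) : List A := List.ofFn (fun i : Fin r => t i)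

/-- The infinite Stewart word `T(𝐭)`: its symbol at position `n` is the eventual
value of `T(t_0 ⋯ t_{r-1})[n]` as `r → ∞`. -/
noncomputable def stewInf (t : ℕ → A) (n : ℕ) : B :=
  Classical.epsilon (fun v : B => ∃ R : ℕ, ∀ r ≥ R, (stewT (prefT t r)).getD n B.bq = v)

/-- `w` occurs as a factor of the infinite word `x`. -/
def FactorOf (w : List B) (x : ℕ → B) : Prop :=
  ∃ i : ℕ, ∀ j : ℕ, j < w.length → w.getD j B.bq = x (i + j)

/-- `w` has period `p ≥ 1`: `w[i] = w[i+p]` for all `0 ≤ i < |w| - p`. -/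
def HasPeriod (w : List B) (p : ℕ) : Prop :=
  1 ≤ p ∧ ∀ i : ℕ, i + p < w.length → w.getD i B.bq = w.getD (i + p) B.bq

/-- The least period `per(w)` of a word. -/
noncomputable def leastPeriod (w : List B) : ℕ := sInf {p | HasPeriod w p}

/-- The exponent `exp(w) = |w| / per(w)` of a word. -/
noncomputable def expo (w : List B) : ℝ := (w.length : ℝ) / (leastPeriod w : ℝ)

/-- The Hamming distance between two Stewart patterns: the number of positions
`p ∈ {0,1,2}` at which the length-3 words differ. -/
def ham (g h : A) : ℕ :=
  (Finset.univ.filter fun p : Fin 3 => (pat g).getD p B.bq ≠ (pat h).getD p B.bq).card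

/-- `t` is ultimately periodic. -/
def UltPeriodic (t : ℕ → A) : Prop :=
  ∃ N : ℕ, ∃ p : ℕ, 1 ≤ p ∧ ∀ n ≥ N, t (n + p) = t n

/-- An infinite word `x` is 3-automatic: there is a finite automaton with output,
reading base-3 representations least-significant-digit first (trailing zeros
allowed), computing `x`. -/
def IsThreeAutomatic (x : ℕ → B) : Prop :=
  ∃ (Q : Type) (_ : Finite Q) (δ : Q → Fin 3 → Q) (q0 : Q) (τ : Q → B),
    ∀ (r : ℕ) (e : Fin r → Fin 3),
      τ (List.foldl δ q0 (List.ofFn fun i => e i)) =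
        x (∑ i : Fin r, (e i).val * 3 ^ (i : ℕ))

namespace StewAux

open B

/-- number of `?` symbols -/
def cnt (w : List B) : ℕ := w.count B.bq

lemma fill_nil : ∀ w : List B, fill w [] = w
  | [] => rfl
  | B.b0 :: rest => by simp [fill, fill_nil rest]
  | B.b1 :: rest => by simp [fill, fill_nil rest]
  | B.bq :: rest => by simp [fill, fill_nil rest]

lemma fill_single_bq : ∀ w : List B, fill w [B.bq] = w
  | [] => rfl
  | B.b0 :: rest => by simp [fill, fill_single_bq rest]
  | B.b1 :: rest => by simp [fill, fill_single_bq rest]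
  | B.bq :: rest => by simp [fill, fill_nil rest]

lemma length_fill : ∀ (w : List B) (s : List B), (fill w s).length = w.length
  | [], _ => rfl
  | B.b0 :: rest, s => by simp [fill, length_fill rest s]
  | B.b1 :: rest, s => by simp [fill, length_fill rest s]
  | B.bq :: rest, [] => by simp [fill, length_fill rest []]
  | B.bq :: rest, x :: ss => by simp [fill, length_fill rest ss]

lemma cnt_fill : ∀ (w : List B) (s : List B),
    cnt (fill w s) = cnt (s.take (cnt w)) + (cnt w - s.length)
  | [], s => by simp [cnt, fill]
  | B.b0 :: rest, s => by simp [cnt, fill, List.count_cons] at *; simpa [cnt] using cnt_fill rest s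
  | B.b1 :: rest, s => by simp [cnt, fill, List.count_cons] at *; simpa [cnt] using cnt_fill rest s
  | B.bq :: rest, [] => by
      simp [cnt, fill, List.count_cons, fill_nil]
  | B.bq :: rest, x :: ss => by
      have ih := cnt_fill rest ss
      simp [cnt, fill, List.count_cons] at ih ⊢
      omega

lemma fill_append : ∀ (u v s : List B),
    fill (u ++ v) s = fill u (s.take (cnt u)) ++ fill v (s.drop (cnt u))
  | [], v, s => by simp [cnt, fill]
  | B.b0 :: u, v, s => by simp [cnt, fill, List.count_cons, fill_append u v s]
  | B.b1 :: u, v, s => by simp [cnt, fill, List.count_cons, fill_append u v s]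
  | B.bq :: u, v, [] => by
      simp [cnt, fill, List.count_cons, fill_nil, fill_append u v []]
  | B.bq :: u, v, x :: ss => by
      have ih := fill_append u v ss
      simp [cnt, fill, List.count_cons, ih]

lemma fill_fill : ∀ (w u v : List B), cnt w ≤ u.length →
    fill (fill w u) v = fill w (fill u v)
  | [], u, v, _ => by simp [fill]
  | B.b0 :: w, u, v, h => by
      simp [cnt, List.count_cons] at h
      simp [fill, fill_fill w u v h]
  | B.b1 :: w, u, v, h => by
      simp [cnt, List.count_cons] at h
      simp [fill, fill_fill w u v h]
  | B.bq :: w, [], v, h => by simp [cnt, List.count_cons] at h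
  | B.bq :: w, B.bq :: ss, [], h => by
      simp [cnt, List.count_cons] at h
      simp [fill, fill_nil, fill_fill w ss [] (by simp only [cnt]; omega)]
  | B.bq :: w, B.bq :: ss, x :: ts, h => by
      simp [cnt, List.count_cons] at h
      simp [fill, fill_fill w ss ts (by simp only [cnt]; omega)]
  | B.bq :: w, B.b0 :: ss, v, h => by
      simp [cnt, List.count_cons] at h
      simp [fill, fill_fill w ss v (by simp only [cnt]; omega)]
  | B.bq :: w, B.b1 :: ss, v, h => by
      simp [cnt, List.count_cons] at h
      simp [fill, fill_fill w ss v (by simp only [cnt]; omega)]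

end StewAux
namespace StewAux

lemma length_Trev : ∀ r : List A, (Trev r).length = 3 ^ r.length
  | [] => rfl
  | g :: r => by
      simp [Trev, length_fill, length_Trev r, pow_succ]
      ring

lemma cnt_Trev : ∀ r : List A, cnt (Trev r) = 1
  | [] => rfl
  | g :: r => by
      have h3 : cnt (Trev r ++ Trev r ++ Trev r) = 3 := by
        simp [cnt, List.count_append]
        have := cnt_Trev r
        simp [cnt] at this
        omega
      have hlen : (pat g).length = 3 := by cases g <;> rfl
      rw [Trev, cnt_fill, h3, hlen]
      have : (pat g).take 3 = pat g := by cases g <;> rfl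
      rw [this]
      cases g <;> rfl

/-- the symbol substituted into position `p` of a block whose `?` gets `s`. -/
def sub (g : A) (p : ℕ) (s : B) : B :=
  if (pat g).getD p B.bq = B.bq then s else (pat g).getD p B.bq

/-- `Trev r` with its unique `?` replaced by `s`. -/
def D (r : List A) (s : B) : List B := fill (Trev r) [s]

lemma length_D (r : List A) (s : B) : (D r s).length = 3 ^ r.length := by
  rw [D, length_fill, length_Trev]

lemma fill_pat (g : A) (s : B) :
    fill (pat g) [s] = [sub g 0 s, sub g 1 s, sub g 2 s] := by
  cases g <;> simp [pat, fill, sub]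

lemma D_cons (g : A) (r : List A) (s : B) :
    D (g :: r) s = D r (sub g 0 s) ++ D r (sub g 1 s) ++ D r (sub g 2 s) := by
  have h1 : cnt (Trev r) = 1 := cnt_Trev r
  have hlen : (pat g).length = 3 := by cases g <;> rfl
  have hcnt3 : cnt (Trev r ++ Trev r ++ Trev r) = 3 := by
    simp [cnt, List.count_append] at *
    omega
  rw [D, Trev, fill_fill _ _ _ (by rw [hcnt3, hlen]), fill_pat]
  rw [List.append_assoc, fill_append, h1]
  rw [fill_append, h1]
  simp [D, List.append_assoc]

/-- bottom-level substitution symbols of the `3^|m|` blocks. -/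
def symbs : List A → B → List B
  | [], s => [s]
  | g :: m, s => symbs m (sub g 0 s) ++ symbs m (sub g 1 s) ++ symbs m (sub g 2 s)

lemma expand : ∀ (m rest : List A) (s : B),
    D (m ++ rest) s = ((symbs m s).map (D rest)).flatten
  | [], rest, s => by simp [symbs]
  | g :: m, rest, s => by
      simp only [List.cons_append, D_cons, symbs, List.map_append, List.flatten_append,
        expand m rest]

end StewAux
instance : Fintype A :=
  ⟨⟨↑[A.a, A.b, A.c, A.d, A.e, A.f], by decide⟩, fun x => by cases x <;> decide⟩
instance : Fintype B :=
  ⟨⟨↑[B.b0, B.b1, B.bq], by decide⟩, fun x => by cases x <;> decide⟩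

namespace StewAux

/-- bool: list contains two equal adjacent entries -/
def adj1 : List B → Bool
  | x :: y :: rest => (x == y) || adj1 (y :: rest)
  | _ => false

/-- bool: list contains a factor `σ τ σ τ` -/
def adj2 : List B → Bool
  | x :: y :: z :: w :: rest => ((x == z) && (y == w)) || adj2 (y :: z :: w :: rest)
  | _ => false

lemma adj1_spec : ∀ L : List B, adj1 L = true →
    ∃ S₁ σ S₂, L = S₁ ++ σ :: σ :: S₂
  | x :: y :: rest, h => by
      rw [adj1, Bool.or_eq_true, beq_iff_eq] at h
      rcases h with h | h
      · exact ⟨[], x, rest, by simp [h]⟩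
      · obtain ⟨S₁, σ, S₂, hE⟩ := adj1_spec (y :: rest) h
        exact ⟨x :: S₁, σ, S₂, by simp [hE]⟩

lemma adj2_spec : ∀ L : List B, adj2 L = true →
    ∃ S₁ σ τ S₂, L = S₁ ++ σ :: τ :: σ :: τ :: S₂
  | x :: y :: z :: w :: rest, h => by
      rw [adj2, Bool.or_eq_true, Bool.and_eq_true, beq_iff_eq, beq_iff_eq] at h
      rcases h with ⟨h1, h2⟩ | h
      · exact ⟨[], x, y, rest, by simp [h1, h2]⟩
      · obtain ⟨S₁, σ, τ, S₂, hE⟩ := adj2_spec (y :: z :: w :: rest) h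
        exact ⟨x :: S₁, σ, τ, S₂, by simp [hE]⟩

lemma base1 : ∀ (g h i : A) (s : B), s ≠ B.bq →
    adj1 (symbs [g, h, i] s) = true := by decide

lemma base2 : ∀ (g h i : A) (s : B), s ≠ B.bq →
    adj2 (symbs [g, h, i] s) = true := by decide

lemma sub_ne_bq (g : A) (p : ℕ) (s : B) (hs : s ≠ B.bq) : sub g p s ≠ B.bq := by
  rw [sub]; split
  · exact hs
  · assumption

lemma L1 : ∀ (m : List A) (s : B), s ≠ B.bq → 3 ≤ m.length →
    ∃ S₁ σ S₂, symbs m s = S₁ ++ σ :: σ :: S₂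
  | [], _, _, hl => by simp at hl
  | g :: m, s, hs, hl => by
      by_cases hm : 3 ≤ m.length
      · obtain ⟨S₁, σ, S₂, hE⟩ := L1 m (sub g 0 s) (sub_ne_bq g 0 s hs) hm
        exact ⟨S₁, σ, S₂ ++ symbs m (sub g 1 s) ++ symbs m (sub g 2 s),
          by simp [symbs, hE]⟩
      · have h2 : m.length = 2 := by simp at hl; omega
        obtain ⟨h, i, rfl⟩ := List.length_eq_two.mp h2
        obtain ⟨S₁, σ, S₂, hE⟩ := adj1_spec _ (base1 g h i s hs)
        exact ⟨S₁, σ, S₂, hE⟩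

lemma L2 : ∀ (m : List A) (s : B), s ≠ B.bq → 3 ≤ m.length →
    ∃ S₁ σ τ S₂, symbs m s = S₁ ++ σ :: τ :: σ :: τ :: S₂
  | [], _, _, hl => by simp at hl
  | g :: m, s, hs, hl => by
      by_cases hm : 3 ≤ m.length
      · obtain ⟨S₁, σ, τ, S₂, hE⟩ := L2 m (sub g 0 s) (sub_ne_bq g 0 s hs) hm
        exact ⟨S₁, σ, τ, S₂ ++ symbs m (sub g 1 s) ++ symbs m (sub g 2 s),
          by simp [symbs, hE]⟩
      · have h2 : m.length = 2 := by simp at hl; omega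
        obtain ⟨h, i, rfl⟩ := List.length_eq_two.mp h2
        obtain ⟨S₁, σ, τ, S₂, hE⟩ := adj2_spec _ (base2 g h i s hs)
        exact ⟨S₁, σ, τ, S₂, hE⟩

lemma top1 (m : List A) (hl : 4 ≤ m.length) :
    ∃ S₁ σ S₂, symbs m B.bq = S₁ ++ σ :: σ :: S₂ := by
  obtain ⟨g, m', rfl⟩ : ∃ g m', m = g :: m' := by
    cases m with
    | nil => simp at hl
    | cons g m' => exact ⟨g, m', rfl⟩
  have hm' : 3 ≤ m'.length := by simp at hl; omega
  by_cases h0 : sub g 0 B.bq = B.bq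
  · have h1 : sub g 1 B.bq ≠ B.bq := by
      revert h0; cases g <;> decide
    obtain ⟨S₁, σ, S₂, hE⟩ := L1 m' _ h1 hm'
    exact ⟨symbs m' (sub g 0 B.bq) ++ S₁, σ,
      S₂ ++ symbs m' (sub g 2 B.bq), by simp [symbs, hE]⟩
  · obtain ⟨S₁, σ, S₂, hE⟩ := L1 m' _ h0 hm'
    exact ⟨S₁, σ, S₂ ++ symbs m' (sub g 1 B.bq) ++ symbs m' (sub g 2 B.bq),
      by simp [symbs, hE]⟩

lemma top2 (m : List A) (hl : 4 ≤ m.length) :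
    ∃ S₁ σ τ S₂, symbs m B.bq = S₁ ++ σ :: τ :: σ :: τ :: S₂ := by
  obtain ⟨g, m', rfl⟩ : ∃ g m', m = g :: m' := by
    cases m with
    | nil => simp at hl
    | cons g m' => exact ⟨g, m', rfl⟩
  have hm' : 3 ≤ m'.length := by simp at hl; omega
  by_cases h0 : sub g 0 B.bq = B.bq
  · have h1 : sub g 1 B.bq ≠ B.bq := by
      revert h0; cases g <;> decide
    obtain ⟨S₁, σ, τ, S₂, hE⟩ := L2 m' _ h1 hm'
    exact ⟨symbs m' (sub g 0 B.bq) ++ S₁, σ, τ,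
      S₂ ++ symbs m' (sub g 2 B.bq), by simp [symbs, hE]⟩
  · obtain ⟨S₁, σ, τ, S₂, hE⟩ := L2 m' _ h0 hm'
    exact ⟨S₁, σ, τ, S₂ ++ symbs m' (sub g 1 B.bq) ++ symbs m' (sub g 2 B.bq),
      by simp [symbs, hE]⟩

end StewAux
namespace StewAux

lemma getD_append_off (P R : List B) (a : ℕ) :
    (P ++ R).getD (P.length + a) B.bq = R.getD a B.bq := by
  rw [List.getD_eq_getElem?_getD, List.getD_eq_getElem?_getD,
    List.getElem?_append_right (by omega)]
  have h : P.length + a - P.length = a := by omega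
  rw [h]

lemma getD_append_lt (X R : List B) (a : ℕ) (h : a < X.length) :
    (X ++ R).getD a B.bq = X.getD a B.bq := by
  rw [List.getD_eq_getElem?_getD, List.getD_eq_getElem?_getD,
    List.getElem?_append_left h]

lemma square_of_decomp (P X Q : List B) (n : ℕ) (_hn : 1 ≤ n) (hX : X.length = n) :
    ∃ i : ℕ, i + 2 * n ≤ (P ++ X ++ X ++ Q).length ∧
      ∀ j < n, (P ++ X ++ X ++ Q).getD (i + j) B.bq
        = (P ++ X ++ X ++ Q).getD (i + n + j) B.bq := by
  refine ⟨P.length, by simp only [List.length_append]; omega, fun j hj => ?_⟩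
  have hR : P ++ X ++ X ++ Q = P ++ (X ++ (X ++ Q)) := by simp [List.append_assoc]
  rw [hR]
  have e2 : P.length + n + j = P.length + (n + j) := by omega
  rw [e2, getD_append_off, getD_append_off]
  have e3 : n + j = X.length + j := by omega
  rw [e3, getD_append_off]
  rw [getD_append_lt X (X ++ Q) j (by omega)]
  exact (getD_append_lt X Q j (by omega)).symm

end StewAux
open StewAux in
theorem stmt_10 (t : List A) (n : ℕ) (hn : 1 ≤ n)
    (hform : ∃ k : ℕ, n = 3 ^ k ∨ n = 2 * 3 ^ k) (hbd : 36 * n ≤ 3 ^ t.length) :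
    ∃ i : ℕ, i + 2 * n ≤ 3 ^ t.length ∧
      ∀ j < n, (stewT t).getD (i + j) B.bq = (stewT t).getD (i + n + j) B.bq := by
  classical
  obtain ⟨k, hk⟩ := hform
  set ℓ := t.length with hℓ
  have hkn : 3 ^ k ≤ n := by rcases hk with rfl | rfl <;> omega
  have hl4 : k + 4 ≤ ℓ := by
    by_contra hcon
    push_neg at hcon
    have h1 : (3:ℕ) ^ ℓ ≤ 3 ^ (k + 3) := Nat.pow_le_pow_right (by norm_num) (by omega)
    have h2 : (3:ℕ) ^ (k + 3) = 27 * 3 ^ k := by rw [pow_add]; ring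
    have h3 : (1:ℕ) ≤ 3 ^ k := Nat.one_le_pow _ _ (by norm_num)
    omega
  set r := t.reverse with hr
  have hrl : r.length = ℓ := by simp [hr, hℓ]
  set m := r.take (ℓ - k) with hm
  set w := r.drop (ℓ - k) with hw
  have hmw : m ++ w = r := List.take_append_drop _ _
  have hml : m.length = ℓ - k := by simp [hm, hrl]
  have hwl : w.length = k := by simp [hw, hrl]; omega
  have hword : stewT t = ((symbs m B.bq).map (D w)).flatten := by
    rw [stewT, ← hr, ← fill_single_bq (Trev r), ← D, ← hmw, expand]
  have hlenw : (stewT t).length = 3 ^ ℓ := by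
    rw [stewT, ← hr, length_Trev, hrl]
  rcases hk with rfl | rfl
  · -- n = 3 ^ k
    obtain ⟨S₁, σ, S₂, hS⟩ := top1 m (by omega)
    have hE : stewT t = (S₁.map (D w)).flatten ++ D w σ ++ D w σ
        ++ (S₂.map (D w)).flatten := by
      rw [hword, hS]; simp [List.append_assoc]
    have hX : (D w σ).length = 3 ^ k := by rw [length_D, hwl]
    obtain ⟨i, hb, hsq⟩ := square_of_decomp _ _ _ _ hn hX
    refine ⟨i, ?_, fun j hj => ?_⟩
    · rw [← hlenw, hE]; exact hb
    · rw [hE]; exact hsq j hj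
  · -- n = 2 * 3 ^ k
    obtain ⟨S₁, σ, τ, S₂, hS⟩ := top2 m (by omega)
    have hE : stewT t = (S₁.map (D w)).flatten ++ (D w σ ++ D w τ)
        ++ (D w σ ++ D w τ) ++ (S₂.map (D w)).flatten := by
      rw [hword, hS]; simp [List.append_assoc]
    have hX : (D w σ ++ D w τ).length = 2 * 3 ^ k := by
      simp [length_D, hwl]; omega
    obtain ⟨i, hb, hsq⟩ := square_of_decomp _ _ _ _ hn hX
    refine ⟨i, ?_, fun j hj => ?_⟩
    · rw [← hlenw, hE]; exact hb
    · rw [hE]; exact hsq j hj
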